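/- Let ρ ≥ 1 be an integer and β a real number. Let K be the ρ×ρ matrix with entries K(λ,κ) = Σ_{α=0}^{ρ−1−κ} c_{ρ−κ−α−1}·c̃_{λ−ρ+α+1} for 0 ≤ λ, κ ≤ ρ−1. Then det(I_ρ − K) equals the determinant of the ρ×ρ Toeplitz matrix whose (i,j) entry, for 0 ≤ i, j ≤ ρ−1, is (a_{i−j} if i ≥ j, else 0) − c̃_{i−j}. -/

import Mathlib

/-- Physicists' Hermite polynomial `H_n` at a real argument. -/
noncomputable def HR (n : ℕ) (x : ℝ) : ℝ :=
  (n.factorial : ℝ) * ∑ m ∈ Finset.range (n / 2 + 1),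
    (-1 : ℝ) ^ m * (2 * x) ^ (n - 2 * m) / ((m.factorial : ℝ) * ((n - 2 * m).factorial : ℝ))

/-- Normalized Hermite polynomial `H̃_n(x) = H_n(x)/n!` at a real argument. -/
noncomputable def HtR (n : ℕ) (x : ℝ) : ℝ := HR n x / (n.factorial : ℝ)

/-- `Φ_n(η) = (2ⁿ/(√π n!))·∫_0^∞ ξⁿ e^{−(ξ−η)²} dξ` for `n ≥ 0`, and
`Φ_n(η) = (e^{−η²}/√π)·2ⁿ·H_{−n−1}(−η)` for `n ≤ −1`. -/
noncomputable def PhiZ (n : ℤ) (η : ℝ) : ℝ :=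
  if 0 ≤ n then
    (2 ^ n.toNat / (Real.sqrt Real.pi * (n.toNat.factorial : ℝ))) *
      ∫ ξ in Set.Ioi (0 : ℝ), ξ ^ n.toNat * Real.exp (-(ξ - η) ^ 2)
  else Real.exp (-η ^ 2) / Real.sqrt Real.pi * (2 : ℝ) ^ n * HR (-n - 1).toNat (-η)

/-- `c_k = 2^{k/2}·H̃_k(β√2)` (with `c_k = 0` for `k < 0`, not needed here). -/
noncomputable def cR (β : ℝ) (k : ℕ) : ℝ := Real.sqrt 2 ^ k * HtR k (β * Real.sqrt 2)

/-- `c̃_k = 2^{k/2}·Φ_k(−β√2)` for every integer `k`. -/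
noncomputable def ctZ (β : ℝ) (k : ℤ) : ℝ := Real.sqrt 2 ^ k * PhiZ k (-(β * Real.sqrt 2))

/-- `(1/2πi)·∫_{ε+iℝ} f(ω) dω`, defined as `(1/2π)·∫_{−∞}^∞ f(ε+it) dt` (line oriented
upward). -/
noncomputable def lineIntegral (ε : ℝ) (f : ℂ → ℂ) : ℂ :=
  (1 / (2 * (Real.pi : ℂ))) * ∫ t : ℝ, f ((ε : ℂ) + t * Complex.I)

/-- The real polynomial `P_n`, determined by `P_n(x) = i^{−n}·H̃_n(i x)`. -/
noncomputable def PR (n : ℕ) (x : ℝ) : ℝ :=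
  (Complex.I ^ (-(n : ℤ)) *
    (((n.factorial : ℂ) * ∑ m ∈ Finset.range (n / 2 + 1),
      (-1 : ℂ) ^ m * (2 * (Complex.I * x)) ^ (n - 2 * m) /
        ((m.factorial : ℂ) * ((n - 2 * m).factorial : ℂ))) / (n.factorial : ℂ))).re

/-- `a_k = 2^{k/2}·(−1)^k·P_k(β√2)`. -/
noncomputable def aR (β : ℝ) (k : ℕ) : ℝ := Real.sqrt 2 ^ k * (-1) ^ k * PR k (β * Real.sqrt 2)

/-
The matrix `K` factors as `T(c̃) · L(c)`, where `T(c̃)` is the Toeplitz matrix `(c̃_{i−j})` and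
`L(f)` is the lower-triangular Toeplitz matrix `(f_{i−j})_{i ≥ j}`. Lower-triangular Toeplitz
matrices multiply like truncated power series, and with `x = β√2` the generating series of `c`
and `a` are `exp(2√2 x t − 2t²)` and `exp(−2√2 x t + 2t²)`, which are mutually inverse. Hence
`L(a) L(c) = I`, so `I − T(c̃) L(c) = (L(a) − T(c̃)) L(c)`, and `det L(c) = c_0^ρ = 1`.
In particular the identity holds for an arbitrary sequence `c̃`.
-/

namespace Matrix

open Finset

variable {R : Type*} [CommRing R] {n : ℕ}

def toeplitz (n : ℕ) (g : ℤ → R) : Matrix (Fin n) (Fin n) R :=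
  of fun i j => g ((i : ℕ) - (j : ℕ))

noncomputable def lowerToeplitz (n : ℕ) (p : PowerSeries R) : Matrix (Fin n) (Fin n) R :=
  of fun i j => if (j : ℕ) ≤ i then PowerSeries.coeff ((i : ℕ) - j) p else 0

theorem lowerToeplitz_mul (p q : PowerSeries R) :
    lowerToeplitz n (p * q) = lowerToeplitz n p * lowerToeplitz n q := by
  ext i j
  simp only [lowerToeplitz, mul_apply, of_apply, ite_zero_mul_ite_zero]
  rw [Fin.sum_univ_eq_sum_range (fun k => if k ≤ i ∧ (j : ℕ) ≤ k then
    PowerSeries.coeff ((i : ℕ) - k) p * PowerSeries.coeff (k - j) q else 0) n, ← sum_filter]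
  have hfilter : {k ∈ range n | k ≤ (i : ℕ) ∧ (j : ℕ) ≤ k} = Ico (j : ℕ) (i + 1) := by
    ext k; simp only [mem_filter, mem_range, mem_Ico]; omega
  rw [hfilter, sum_Ico_eq_sum_range]
  split_ifs with hji
  · rw [mul_comm p, PowerSeries.coeff_mul, Nat.sum_antidiagonal_eq_sum_range_succ_mk,
      show (i : ℕ) + 1 - j = i - j + 1 by omega]
    refine sum_congr rfl fun d _ => ?_
    rw [mul_comm, Nat.add_sub_cancel_left, Nat.sub_sub]
  · rw [Nat.sub_eq_zero_of_le (by omega), sum_range_zero]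

theorem lowerToeplitz_one : lowerToeplitz n (1 : PowerSeries R) = 1 := by
  ext i j
  simp only [lowerToeplitz, of_apply, PowerSeries.coeff_one, one_apply, Fin.ext_iff]
  split_ifs <;> first | rfl | omega

theorem det_lowerToeplitz (p : PowerSeries R) :
    (lowerToeplitz n p).det = PowerSeries.constantCoeff p ^ n := by
  rw [det_of_isLowerTriangular (lowerToeplitz n p) fun i j hij => if_neg (not_le.mpr hij)]
  simp [lowerToeplitz]

theorem one_sub_mul_lowerToeplitz {p q : PowerSeries R} (hpq : p * q = 1)
    (N : Matrix (Fin n) (Fin n) R) :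
    1 - N * lowerToeplitz n p = (lowerToeplitz n q - N) * lowerToeplitz n p := by
  rw [sub_mul, ← lowerToeplitz_mul, mul_comm q, hpq, lowerToeplitz_one]

theorem of_sum_eq_toeplitz_mul_lowerToeplitz (f : ℕ → R) (g : ℤ → R) :
    (of fun l k : Fin n => ∑ α ∈ range (n - (k : ℕ)),
        f (n - (k : ℕ) - α - 1) * g (((l : ℕ) : ℤ) - (n : ℤ) + (α : ℤ) + 1)) =
      toeplitz n g * lowerToeplitz n (PowerSeries.mk f) := by
  ext l k
  simp only [toeplitz, lowerToeplitz, mul_apply, of_apply, PowerSeries.coeff_mk, mul_ite,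
    mul_zero]
  rw [Fin.sum_univ_eq_sum_range (fun m => if (k : ℕ) ≤ m then g (l - m) * f (m - k) else 0) n,
    ← sum_filter]
  have hfilter : {m ∈ range n | (k : ℕ) ≤ m} = Ico (k : ℕ) n := by
    ext m; simp only [mem_filter, mem_range, mem_Ico]; omega
  rw [hfilter, sum_Ico_eq_sum_range, ← sum_range_reflect]
  refine sum_congr rfl fun α hα => ?_
  rw [mem_range] at hα
  rw [mul_comm, show n - k - (n - k - 1 - α) - 1 = α by omega, Nat.add_sub_cancel_left]
  congr 2
  push_cast [show α ≤ n - k - 1 by omega, show (k : ℕ) ≤ n by omega]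
  omega

end Matrix

namespace PowerSeries

open Finset

theorem rescale_expand {R : Type*} [CommRing R] (p : ℕ) (hp : p ≠ 0) (r : R)
    (f : PowerSeries R) : rescale r (expand p hp f) = expand p hp (rescale (r ^ p) f) := by
  ext n
  rw [coeff_rescale, coeff_expand, coeff_expand]
  split_ifs with h
  · obtain ⟨k, rfl⟩ := h
    rw [coeff_rescale, Nat.mul_div_cancel_left _ (Nat.pos_of_ne_zero hp), pow_mul]
  · rw [mul_zero]

variable {A : Type*} [CommRing A] [Algebra ℚ A]

/-- `exp (a X + s X²)`. -/
noncomputable def expQuadratic (a s : A) : PowerSeries A :=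
  rescale a (exp A) * expand 2 two_ne_zero (rescale s (exp A))

theorem expQuadratic_mul (a s b t : A) :
    expQuadratic a s * expQuadratic b t = expQuadratic (a + b) (s + t) := by
  rw [expQuadratic, expQuadratic, expQuadratic, ← exp_mul_exp_eq_exp_add a,
    ← exp_mul_exp_eq_exp_add s, map_mul]
  ring

theorem expQuadratic_zero : expQuadratic (0 : A) 0 = 1 := by
  simp [expQuadratic]

theorem rescale_expQuadratic (r a s : A) :
    rescale r (expQuadratic a s) = expQuadratic (r * a) (r ^ 2 * s) := by
  rw [expQuadratic, expQuadratic, map_mul, rescale_expand, rescale_rescale, rescale_rescale,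
    mul_comm a, mul_comm s]

theorem coeff_expQuadratic {K : Type*} [Field K] [CharZero K] (a s : K) (n : ℕ) :
    coeff n (expQuadratic a s) = ∑ m ∈ range (n / 2 + 1),
      s ^ m * a ^ (n - 2 * m) / ((m.factorial : K) * ((n - 2 * m).factorial : K)) := by
  set E := rescale a (exp K)
  set G := expand 2 two_ne_zero (rescale s (exp K))
  have hterm : ∀ m ∈ range (n / 2 + 1),
      s ^ m * a ^ (n - 2 * m) / ((m.factorial : K) * ((n - 2 * m).factorial : K)) =
        coeff (n - 2 * m) E * coeff (2 * m) G := by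
    intro m _
    simp only [E, G, coeff_expand_mul, coeff_rescale, coeff_exp, map_div₀, map_one, map_natCast]
    ring
  have hinj : Set.InjOn (fun m => (n - 2 * m, 2 * m)) (range (n / 2 + 1)) := by
    intro m _ m' _ h
    simp only [Prod.mk.injEq] at h
    omega
  rw [expQuadratic, coeff_mul, sum_congr rfl hterm, ← sum_image (g := fun m => (n - 2 * m, 2 * m))
    (f := fun p => coeff p.1 E * coeff p.2 G) hinj]
  refine (sum_subset ?_ fun p hp hnot => ?_).symm
  · intro p hp
    simp only [mem_image, mem_range] at hp
    obtain ⟨m, hm, rfl⟩ := hp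
    rw [HasAntidiagonal.mem_antidiagonal]
    omega
  · have hodd : ¬ 2 ∣ p.2 := by
      rintro ⟨m, hm⟩
      rw [HasAntidiagonal.mem_antidiagonal] at hp
      exact hnot (mem_image.mpr
        ⟨m, mem_range.mpr (by omega), Prod.ext (by simp only; omega) hm.symm⟩)
    rw [coeff_expand_of_not_dvd _ _ _ hodd, mul_zero]

end PowerSeries

open PowerSeries

theorem HtR_eq_coeff_expQuadratic (n : ℕ) (x : ℝ) :
    HtR n x = coeff n (expQuadratic (2 * x) (-1)) := by
  rw [HtR, HR, mul_div_cancel_left₀ _ (Nat.cast_ne_zero.mpr n.factorial_ne_zero),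
    coeff_expQuadratic]

theorem PR_eq_coeff_expQuadratic (n : ℕ) (x : ℝ) :
    PR n x = coeff n (expQuadratic (2 * x) 1) := by
  have hrescale : coeff n (expQuadratic (2 * (Complex.I * x)) (-1)) =
      Complex.I ^ n * coeff n (expQuadratic (2 * (x : ℂ)) 1) := by
    rw [show 2 * (Complex.I * x) = Complex.I * (2 * x) by ring,
      show (-1 : ℂ) = Complex.I ^ 2 * 1 by simp, ← rescale_expQuadratic, coeff_rescale]
  have hreal : coeff n (expQuadratic (2 * (x : ℂ)) 1) = coeff n (expQuadratic (2 * x) 1) := by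
    simp only [coeff_expQuadratic]
    push_cast
    rfl
  rw [PR, mul_div_cancel_left₀ _ (Nat.cast_ne_zero.mpr n.factorial_ne_zero),
    ← coeff_expQuadratic, hrescale, hreal, zpow_neg, zpow_natCast,
    inv_mul_cancel_left₀ (pow_ne_zero _ Complex.I_ne_zero), Complex.ofReal_re]

theorem mk_cR (β : ℝ) :
    mk (cR β) = rescale (Real.sqrt 2) (expQuadratic (2 * (β * Real.sqrt 2)) (-1)) := by
  ext n
  rw [coeff_mk, coeff_rescale, cR, HtR_eq_coeff_expQuadratic]

theorem mk_aR (β : ℝ) :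
    mk (aR β) = rescale (Real.sqrt 2) (expQuadratic (-(2 * (β * Real.sqrt 2))) 1) := by
  ext n
  rw [coeff_mk, coeff_rescale, aR, PR_eq_coeff_expQuadratic, mul_assoc, ← coeff_rescale,
    rescale_expQuadratic]
  norm_num

theorem mk_cR_mul_mk_aR (β : ℝ) : mk (cR β) * mk (aR β) = 1 := by
  rw [mk_cR, mk_aR, ← map_mul, expQuadratic_mul, add_neg_cancel, neg_add_cancel,
    expQuadratic_zero, map_one]

theorem cR_zero (β : ℝ) : cR β 0 = 1 := by
  simp [cR, HtR, HR]

theorem fredholm_toeplitz_general (ρ : ℕ) (β : ℝ) :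
    (1 - Matrix.of fun lam kap : Fin ρ =>
        ∑ α ∈ Finset.range (ρ - (kap : ℕ)),
          cR β (ρ - (kap : ℕ) - α - 1) * ctZ β (((lam : ℕ) : ℤ) - (ρ : ℤ) + (α : ℤ) + 1)).det
    = (Matrix.of fun i j : Fin ρ =>
        (if (j : ℕ) ≤ (i : ℕ) then aR β ((i : ℕ) - (j : ℕ)) else 0)
          - ctZ β (((i : ℕ) : ℤ) - ((j : ℕ) : ℤ))).det := by
  rw [Matrix.of_sum_eq_toeplitz_mul_lowerToeplitz, Matrix.one_sub_mul_lowerToeplitz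
    (mk_cR_mul_mk_aR β), Matrix.det_mul, Matrix.det_lowerToeplitz, constantCoeff_mk, cR_zero,
    one_pow, mul_one]
  congr 1
  ext i j
  simp only [Matrix.sub_apply, Matrix.lowerToeplitz, Matrix.toeplitz, Matrix.of_apply, coeff_mk]

/-- `det(I_ρ − K)`, with `K(λ,κ) = Σ_{α=0}^{ρ−1−κ} c_{ρ−κ−α−1}·c̃_{λ−ρ+α+1}`, equals the
determinant of the Toeplitz matrix with `(i,j)` entry `(a_{i−j} if i ≥ j else 0) − c̃_{i−j}`. -/
theorem fredholm_toeplitz (ρ : ℕ) (hρ : 1 ≤ ρ) (β : ℝ) :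
    (1 - Matrix.of fun lam kap : Fin ρ =>
        ∑ α ∈ Finset.range (ρ - (kap : ℕ)),
          cR β (ρ - (kap : ℕ) - α - 1) * ctZ β (((lam : ℕ) : ℤ) - (ρ : ℤ) + (α : ℤ) + 1)).det
    = (Matrix.of fun i j : Fin ρ =>
        (if (j : ℕ) ≤ (i : ℕ) then aR β ((i : ℕ) - (j : ℕ)) else 0)
          - ctZ β (((i : ℕ) : ℤ) - ((j : ℕ) : ℤ))).det :=
  fredholm_toeplitz_general ρ β
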